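/- For the Plebański–Demiański metric with null geodesics in the plane cosθ = −l/a satisfying (a² − 2alC + l²)E = aL_z, the separated radial and angular equations of motion reduce to (Σ ṙ)² = E²r⁴ and (Σ θ̇-equation) (Σ·(dθ/dλ))²·(appropriately expressed as a function of cosθ) = −E²(l + a cosθ)⁴/a²; in particular the right-hand side of the angular equation is nonpositive and vanishes exactly when cosθ = −l/a, so motion is confined to the plane cosθ = −l/a. -/

import Mathlib

/-- The separated radial function `Ξ¹(r) = Δ_r (f κ − R^{ij} pᵢpⱼ − K)` for the
Plebański–Demiański metric with `κ = 0`, `K = 0`, `p₀ = −E`, `p₃ = L_z`. -/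
noncomputable def PDXi1 (m a l C Q E Lz r : ℝ) : ℝ :=
  (r ^ 2 - 2 * m * r + a ^ 2 - l ^ 2 + Q ^ 2) *
    (0 - (-((r ^ 2 + a ^ 2 + l ^ 2 - 2 * a * l * C) ^ 2) * E ^ 2
            + 2 * a * (r ^ 2 + a ^ 2 + l ^ 2 - 2 * a * l * C) * E * Lz
            - a ^ 2 * Lz ^ 2) / (r ^ 2 - 2 * m * r + a ^ 2 - l ^ 2 + Q ^ 2)
       - 0)

/-- The separated angular function `Ξ²(θ) = Θ²² (K + h κ − Θ^{ij} pᵢpⱼ)` for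
the Plebański–Demiański metric with `κ = 0`, `K = 0`, `Θ²² = 1`. -/
noncomputable def PDXi2 (a l C E Lz θ : ℝ) : ℝ :=
  0 + 0 - ((a * Real.sin θ ^ 2 - 2 * l * (Real.cos θ + C)) * E - Lz) ^ 2
      / Real.sin θ ^ 2

open Real

lemma PDXi1_eq_sq {m a l C Q E Lz r : ℝ}
    (hΔ : r ^ 2 - 2 * m * r + a ^ 2 - l ^ 2 + Q ^ 2 ≠ 0) :
    PDXi1 m a l C Q E Lz r = ((r ^ 2 + a ^ 2 + l ^ 2 - 2 * a * l * C) * E - a * Lz) ^ 2 := by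
  unfold PDXi1
  rw [sub_zero, zero_sub, mul_neg, mul_div_cancel₀ _ hΔ]
  ring

lemma sin_sq_mul_PDXi2 {a l C E Lz θ : ℝ} (hθ : sin θ ≠ 0) :
    sin θ ^ 2 * PDXi2 a l C E Lz θ = -((a * sin θ ^ 2 - 2 * l * (cos θ + C)) * E - Lz) ^ 2 := by
  unfold PDXi2
  field_simp
  ring

lemma radial_term_eq {a l C E Lz : ℝ} (hE : (a ^ 2 - 2 * a * l * C + l ^ 2) * E = a * Lz)
    (r : ℝ) :
    (r ^ 2 + a ^ 2 + l ^ 2 - 2 * a * l * C) * E - a * Lz = E * r ^ 2 := by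
  linear_combination hE

/-- `sin²θ = 1 - cos²θ` makes `a` times the angular term a perfect square in `l + a cos θ`. -/
lemma angular_term_eq {a l C E Lz : ℝ} (hE : (a ^ 2 - 2 * a * l * C + l ^ 2) * E = a * Lz)
    (ha : a ≠ 0) (θ : ℝ) :
    (a * sin θ ^ 2 - 2 * l * (cos θ + C)) * E - Lz = -(E * (l + a * cos θ) ^ 2) / a := by
  field_simp
  linear_combination a ^ 2 * E * sin_sq_add_cos_sq θ + hE

/-- Equation (32): for null geodesics with `K = 0` and
`(a² − 2alC + l²) E = a L_z`, the separated equations of motion reduce to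
`(Σ ṙ)² = Ξ¹ = E² r⁴` and `sin²θ · Ξ² = −E² (l + a cos θ)⁴ / a²`; the angular
right-hand side is nonpositive and (for `E ≠ 0`) vanishes exactly when
`cos θ = −l/a`, so motion is confined to that plane. -/
theorem PD_null_ray_equations (m a l C Q E Lz : ℝ) (ha : a ≠ 0)
    (hE : (a ^ 2 - 2 * a * l * C + l ^ 2) * E = a * Lz) :
    (∀ r : ℝ, r ^ 2 - 2 * m * r + a ^ 2 - l ^ 2 + Q ^ 2 ≠ 0 →
        PDXi1 m a l C Q E Lz r = E ^ 2 * r ^ 4) ∧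
    (∀ θ : ℝ, Real.sin θ ≠ 0 →
        Real.sin θ ^ 2 * PDXi2 a l C E Lz θ =
          -(E ^ 2 * (l + a * Real.cos θ) ^ 4) / a ^ 2) ∧
    (∀ θ : ℝ, -(E ^ 2 * (l + a * Real.cos θ) ^ 4) / a ^ 2 ≤ 0) ∧
    (E ≠ 0 → ∀ θ : ℝ,
        (-(E ^ 2 * (l + a * Real.cos θ) ^ 4) / a ^ 2 = 0 ↔
          l + a * Real.cos θ = 0)) := by
  refine ⟨fun r hΔ => ?_, fun θ hθ => ?_, fun θ => ?_, fun hE0 θ => ?_⟩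
  · rw [PDXi1_eq_sq hΔ, radial_term_eq hE]
    ring
  · rw [sin_sq_mul_PDXi2 hθ, angular_term_eq hE ha]
    ring
  · exact div_nonpos_of_nonpos_of_nonneg (neg_nonpos.2 (by positivity)) (sq_nonneg a)
  · simp [ha, hE0]
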